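/- arXiv:1709.09481 — 2 statements merged into one kernel-verified Lean document; each statement's English description precedes it below -/
import Mathlib

section
/- Let L₁, L₂, … be i.i.d. nonnegative random variables with P(L > x) ≤ 1/g(x) for a non-decreasing function g tending to infinity. For any sequence a_m → ∞ and constants δ, ε₂ > 0, define z_L(m) implicitly by z_L(m)·g^{(-1)}(z_L(m)^{1+ε₂}) = a_m^{1−δ}, and T_m := g^{(-1)}(z_L(m)^{1+ε₂}). Then P(∑_{i=1}^{z_L(m)} L_i ≥ a_m) ≤ z_L(m)^{−ε₂} + a_m^{−δ}. -/
open MeasureTheory ProbabilityTheory Filter Finset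

/-!
Since `z_L(m) · T_m = a_m^{1-δ} < a_m`, there is a threshold `t > T_m` with `z_L(m) · t < a_m`.
If every `L_i` with `i < z_L(m)` were at most `t`, the sum would stay below `a_m`; so the event
forces some `L_i > t`. For `t > T_m` we have `g t ≥ z_L(m)^{1+ε₂}`, and the union bound over
`z_L(m)` indices gives `z_L(m) / z_L(m)^{1+ε₂} = z_L(m)^{-ε₂}`.
-/

/-- If `{x | c ≤ g x}` is unbounded below, its `sInf` is the junk value `0`, but the conclusion
still holds since the set then meets `(-∞, y)`. -/
lemma Monotone.le_of_sInf_setOf_le_lt {g : ℝ → ℝ} (hg : Monotone g) {c y : ℝ}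
    (hne : {x | c ≤ g x}.Nonempty) (hy : sInf {x | c ≤ g x} < y) : c ≤ g y := by
  by_cases hbdd : BddBelow {x | c ≤ g x}
  · obtain ⟨x, hx, hxy⟩ := (csInf_lt_iff hbdd hne).mp hy
    exact hx.trans (hg hxy.le)
  · obtain ⟨x, hx, hxy⟩ := not_bddBelow_iff.mp hbdd y
    exact hx.trans (hg hxy.le)

lemma measureReal_sum_ge_le_sum_measureReal_gt {Ω ι : Type*} [MeasurableSpace Ω]
    (μ : Measure Ω) [IsFiniteMeasure μ] (s : Finset ι) (X : ι → Ω → ℝ) {a t : ℝ}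
    (hst : #s * t < a) :
    μ.real {ω | a ≤ ∑ i ∈ s, X i ω} ≤ ∑ i ∈ s, μ.real {ω | t < X i ω} := by
  refine (measureReal_mono (fun ω hω => ?_) (measure_ne_top μ _)).trans
    (measureReal_biUnion_finset_le s _)
  by_contra hnot
  simp only [Set.mem_iUnion, Set.mem_ofPred_eq, not_exists, not_lt] at hnot
  have hsum : ∑ i ∈ s, X i ω ≤ #s • t := sum_le_card_nsmul s (X · ω) t hnot
  rw [nsmul_eq_mul] at hsum
  exact hst.not_ge (hω.trans hsum)

lemma Real.mul_inv_rpow_one_add {x : ℝ} (hx : 0 < x) (ε : ℝ) :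
    x * (x ^ (1 + ε))⁻¹ = x ^ (-ε) := by
  rw [Real.rpow_add hx, Real.rpow_one, Real.rpow_neg hx.le]
  field_simp

theorem truncation_sum_bound_general {Ω : Type*} [MeasureSpace Ω]
    [IsProbabilityMeasure (ℙ : Measure Ω)]
    (L : ℕ → Ω → ℝ)
    (g : ℝ → ℝ) (hg : Monotone g) (hgtop : Tendsto g atTop atTop)
    (htail : ∀ i, ∀ x : ℝ, (ℙ {ω | x < L i ω}).toReal ≤ 1 / g x)
    (a : ℕ → ℝ) (hapos : ∀ m, 1 < a m)
    (δ ε₂ : ℝ) (hδ : 0 < δ)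
    (z : ℕ → ℕ) (hzpos : ∀ m, 0 < z m)
    (hz : ∀ m, (z m : ℝ) * sInf {y : ℝ | (z m : ℝ) ^ (1 + ε₂) ≤ g y} = a m ^ (1 - δ)) :
    ∀ m : ℕ,
      (ℙ {ω | a m ≤ ∑ i ∈ Finset.range (z m), L i ω}).toReal ≤
        (z m : ℝ) ^ (-ε₂) + a m ^ (-δ) := by
  intro m
  have hz0 : (0 : ℝ) < z m := by exact_mod_cast hzpos m
  set c : ℝ := (z m : ℝ) ^ (1 + ε₂)
  have hzT : (z m : ℝ) * sInf {y | c ≤ g y} < a m :=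
    (hz m).trans_lt (Real.rpow_lt_self_of_one_lt (hapos m) (by linarith))
  obtain ⟨t, hTt, hta⟩ := exists_between ((lt_div_iff₀' hz0).mpr hzT)
  have hct : c ≤ g t := hg.le_of_sInf_setOf_le_lt (hgtop.eventually_ge_atTop c).exists hTt
  have htail_t : ∀ i, (ℙ : Measure Ω).real {ω | t < L i ω} ≤ c⁻¹ := fun i =>
    (htail i t).trans (by rw [one_div]; exact inv_anti₀ (by positivity) hct)
  calc (ℙ : Measure Ω).real {ω | a m ≤ ∑ i ∈ range (z m), L i ω}
      ≤ ∑ i ∈ range (z m), (ℙ : Measure Ω).real {ω | t < L i ω} :=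
        measureReal_sum_ge_le_sum_measureReal_gt ℙ _ L
          (by simpa using (lt_div_iff₀' hz0).mp hta)
    _ ≤ ∑ _i ∈ range (z m), c⁻¹ := sum_le_sum fun i _ => htail_t i
    _ = (z m : ℝ) ^ (-ε₂) := by
        rw [sum_const, card_range, nsmul_eq_mul, Real.mul_inv_rpow_one_add hz0]
    _ ≤ (z m : ℝ) ^ (-ε₂) + a m ^ (-δ) :=
        le_add_of_nonneg_right (Real.rpow_nonneg (by linarith [hapos m]) _)

/-- Let `(L_i)` be i.i.d. nonnegative random variables with tail
`P(L > x) ≤ 1/g(x)` for a non-decreasing `g` tending to infinity, with generalized inverse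
`g⁻¹(x) = inf{y : g(y) ≥ x}`. For a sequence `a_m → ∞` (positive) and `δ, ε₂ > 0`, if
`z_L(m)` satisfies `z_L(m)·g⁻¹(z_L(m)^{1+ε₂}) = a_m^{1−δ}`, then
`P(∑_{i=1}^{z_L(m)} L_i ≥ a_m) ≤ z_L(m)^{−ε₂} + a_m^{−δ}`. -/
theorem truncation_sum_bound {Ω : Type*} [MeasureSpace Ω]
    [IsProbabilityMeasure (ℙ : Measure Ω)]
    (L : ℕ → Ω → ℝ)
    (hmeas : ∀ i, Measurable (L i))
    (hnonneg : ∀ i ω, 0 ≤ L i ω)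
    (hindep : iIndepFun L ℙ)
    (hident : ∀ i, Measure.map (L i) ℙ = Measure.map (L 0) ℙ)
    (g : ℝ → ℝ) (hg : Monotone g) (hgtop : Tendsto g atTop atTop)
    (hgpos : ∀ x, 0 < g x)
    (htail : ∀ i, ∀ x : ℝ, (ℙ {ω | x < L i ω}).toReal ≤ 1 / g x)
    (a : ℕ → ℝ) (hapos : ∀ m, 1 < a m) (ha : Tendsto a atTop atTop)
    (δ ε₂ : ℝ) (hδ : 0 < δ) (hε₂ : 0 < ε₂)
    (z : ℕ → ℕ) (hzpos : ∀ m, 0 < z m)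
    (hz : ∀ m, (z m : ℝ) * sInf {y : ℝ | (z m : ℝ) ^ (1 + ε₂) ≤ g y} = a m ^ (1 - δ)) :
    ∀ m : ℕ,
      (ℙ {ω | a m ≤ ∑ i ∈ Finset.range (z m), L i ω}).toReal ≤
        (z m : ℝ) ^ (-ε₂) + a m ^ (-δ) :=
  truncation_sum_bound_general L g hg hgtop htail a hapos δ ε₂ hδ z hzpos hz
end

section
/- Let D_n, B_n be ℕ-valued random variables where B_n is the size-biased version of D_n minus one, i.e. P(B_n = k) = (k+1)·P(D_n = k+1)/E[D_n]. If 1 − F_n(x) ≥ x^{−(τ−1)} e^{−C(log x)^γ} for the distribution function F_n of D_n with τ ∈ (2,3), then there is C* > 0 such that 1 − F_{B_n}(x) ≥ x^{−(τ−2)} e^{−C*(log x)^γ} for all large x. -/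
open MeasureTheory ProbabilityTheory Real

/-! `P(B > x) = Σ_{k > x + 1} k P(D = k) / E[D] ≥ (x + 2) P(D > x + 1) / E[D]`, so the tail of
the size-biased law gains one power of `x` over that of `D`. Moving the argument back from
`x + 1` to `x` costs only constant factors, and these, like `1 / E[D]`, are absorbed into the
stretched-exponential factor since `(log x) ^ γ ≥ 1` for `x ≥ 3`. -/

namespace MeasureTheory.Measure

theorem measure_Ioi_nat_eq_tsum (μ : Measure ℕ) (x : ℕ) :
    μ (Set.Ioi x) = ∑' k, μ {k + (x + 1)} := by
  rw [← μ.tsum_indicator_apply_singleton _ measurableSet_Ioi,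
    ← ENNReal.summable.sum_add_tsum_nat_add' (k := x + 1)]
  have hhead : ∀ i ∈ Finset.range (x + 1), (Set.Ioi x).indicator (fun n => μ {n}) i = 0 :=
    fun i hi => Set.indicator_of_notMem (by simpa using Finset.mem_range_succ_iff.mp hi) _
  rw [Finset.sum_eq_zero hhead, zero_add]
  exact tsum_congr fun k => Set.indicator_of_mem (by simp; omega) _

theorem mul_measure_Ioi_le_of_sizeBiased {μ ν : Measure ℕ} {M : ENNReal}
    (hsb : ∀ k : ℕ, ν {k} = ((k : ENNReal) + 1) * μ {k + 1} / M) (x : ℕ) :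
    ((x : ENNReal) + 2) * μ (Set.Ioi (x + 1)) / M ≤ ν (Set.Ioi x) := by
  rw [measure_Ioi_nat_eq_tsum, measure_Ioi_nat_eq_tsum, div_eq_mul_inv,
    ← ENNReal.tsum_mul_left, ← ENNReal.tsum_mul_right]
  refine ENNReal.tsum_le_tsum fun k => ?_
  rw [hsb, div_eq_mul_inv]
  gcongr ?_ * μ {_} * _
  exact_mod_cast (show x + 2 ≤ k + (x + 1) + 1 by omega)

theorem mul_toReal_measure_Ioi_le_of_sizeBiased {μ ν : Measure ℕ} [IsFiniteMeasure ν]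
    {M : ENNReal} (hsb : ∀ k : ℕ, ν {k} = ((k : ENNReal) + 1) * μ {k + 1} / M) (x : ℕ) :
    ((x : ℝ) + 2) * (μ (Set.Ioi (x + 1))).toReal / M.toReal ≤ (ν (Set.Ioi x)).toReal := by
  have h := ENNReal.toReal_mono (measure_ne_top ν _) (mul_measure_Ioi_le_of_sizeBiased hsb x)
  rwa [ENNReal.toReal_div, ENNReal.toReal_mul, ENNReal.toReal_add (by simp) (by simp),
    ENNReal.toReal_natCast, ENNReal.toReal_ofNat] at h

end MeasureTheory.Measure

noncomputable def powerLogTail (a C γ x : ℝ) : ℝ := x ^ (-a) * exp (-C * log x ^ γ)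

namespace Real

theorem one_le_log_rpow {x γ : ℝ} (hx : 3 ≤ x) (hγ : 0 ≤ γ) : 1 ≤ log x ^ γ := by
  refine one_le_rpow ?_ hγ
  rw [le_log_iff_exp_le (by linarith)]
  exact (exp_one_lt_d9.trans (by norm_num)).le.trans hx

theorem log_add_one_rpow_le {x γ : ℝ} (hx : 2 ≤ x) (hγ : 0 ≤ γ) :
    log (x + 1) ^ γ ≤ 2 ^ γ * log x ^ γ := by
  have hlog : log (x + 1) ≤ 2 * log x := by
    rw [two_mul, ← log_mul (by linarith) (by linarith)]
    exact log_le_log (by linarith) (by nlinarith)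
  rw [← mul_rpow zero_le_two (log_nonneg (by linarith))]
  exact rpow_le_rpow (log_nonneg (by linarith)) hlog hγ

theorem two_rpow_mul_rpow_le_add_one_rpow {x a : ℝ} (hx : 1 ≤ x) (ha : a ≤ 0) :
    2 ^ a * x ^ a ≤ (x + 1) ^ a := by
  rw [← mul_rpow zero_le_two (by linarith)]
  exact rpow_le_rpow_of_nonpos (by linarith) (by linarith) ha

theorem add_one_rpow_add_one_le {x a : ℝ} (hx : 0 ≤ x) :
    (x + 1) ^ (a + 1) ≤ (x + 2) * (x + 1) ^ a := by
  rw [rpow_add_one (by linarith), mul_comm]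
  gcongr
  linarith

end Real

theorem powerLogTail_add_abs_log_le {a C γ x c : ℝ} (hc : 0 < c) (hL : 1 ≤ log x ^ γ)
    (hx : 0 ≤ x) :
    powerLogTail a (C + |log c|) γ x ≤ c * powerLogTail a C γ x := by
  have habsorb : exp (-|log c| * log x ^ γ) ≤ c := by
    calc exp (-|log c| * log x ^ γ) ≤ exp (log c) := by
          gcongr
          nlinarith [neg_abs_le (log c), abs_nonneg (log c)]
      _ = c := exp_log hc
  calc powerLogTail a (C + |log c|) γ x
      = x ^ (-a) * exp (-C * log x ^ γ) * exp (-|log c| * log x ^ γ) := by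
        rw [powerLogTail, neg_add, add_mul, exp_add, mul_assoc]
    _ ≤ x ^ (-a) * exp (-C * log x ^ γ) * c := by gcongr
    _ = c * powerLogTail a C γ x := by rw [powerLogTail, mul_comm]

theorem powerLogTail_le_mul_powerLogTail_add_one {τ C γ x : ℝ} (hτ : 2 ≤ τ) (hC : 0 ≤ C)
    (hγ : 0 ≤ γ) (hx : 2 ≤ x) :
    2 ^ (-(τ - 2)) * powerLogTail (τ - 2) (2 ^ γ * C) γ x ≤
      (x + 2) * powerLogTail (τ - 1) C γ (x + 1) := by
  unfold powerLogTail
  have hpow : 2 ^ (-(τ - 2)) * x ^ (-(τ - 2)) ≤ (x + 2) * (x + 1) ^ (-(τ - 1)) :=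
    calc 2 ^ (-(τ - 2)) * x ^ (-(τ - 2)) ≤ (x + 1) ^ (-(τ - 2)) :=
          two_rpow_mul_rpow_le_add_one_rpow (by linarith) (by linarith)
      _ = (x + 1) ^ (-(τ - 1) + 1) := by ring_nf
      _ ≤ (x + 2) * (x + 1) ^ (-(τ - 1)) := add_one_rpow_add_one_le (by linarith)
  have hexp : exp (-(2 ^ γ * C) * log x ^ γ) ≤ exp (-C * log (x + 1) ^ γ) := by
    have := mul_le_mul_of_nonneg_left (log_add_one_rpow_le hx hγ) hC
    rw [exp_le_exp]
    linarith
  calc 2 ^ (-(τ - 2)) * (x ^ (-(τ - 2)) * exp (-(2 ^ γ * C) * log x ^ γ))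
      = (2 ^ (-(τ - 2)) * x ^ (-(τ - 2))) * exp (-(2 ^ γ * C) * log x ^ γ) := by ring
    _ ≤ ((x + 2) * (x + 1) ^ (-(τ - 1))) * exp (-C * log (x + 1) ^ γ) := by gcongr
    _ = _ := by ring

theorem size_biased_tail_lower_bound_general (τ C γ : ℝ) (hτ₁ : 2 < τ)
    (hC : 0 < C) (hγ₀ : 0 < γ)
    (μ ν : Measure ℕ) [IsProbabilityMeasure ν]
    (hmean : (∑' k : ℕ, (k : ENNReal) * μ {k}) ≠ ⊤)
    (hmean0 : (∑' k : ℕ, (k : ENNReal) * μ {k}) ≠ 0)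
    (hsb : ∀ k : ℕ,
      ν {k} = ((k : ENNReal) + 1) * μ {k + 1} / (∑' j : ℕ, (j : ENNReal) * μ {j}))
    (htail : ∀ x : ℕ, 1 ≤ x →
      (x : ℝ) ^ (-(τ - 1)) * Real.exp (-C * (Real.log x) ^ γ) ≤ (μ {n | x < n}).toReal) :
    ∃ Cstar > 0, ∃ x₀ : ℕ, ∀ x : ℕ, x₀ ≤ x →
      (x : ℝ) ^ (-(τ - 2)) * Real.exp (-Cstar * (Real.log x) ^ γ) ≤
        (ν {n | x < n}).toReal := by
  set M := (∑' k : ℕ, (k : ENNReal) * μ {k}).toReal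
  have hM : 0 < M := ENNReal.toReal_pos hmean0 hmean
  set c : ℝ := 2 ^ (-(τ - 2)) / M
  refine ⟨2 ^ γ * C + |log c|, by positivity, 3, fun x hx => ?_⟩
  have hx3 : (3 : ℝ) ≤ x := by exact_mod_cast hx
  have hμ : powerLogTail (τ - 1) C γ (x + 1) ≤ (μ (Set.Ioi (x + 1))).toReal := by
    have h := htail (x + 1) (by omega)
    push_cast at h
    exact h
  calc powerLogTail (τ - 2) (2 ^ γ * C + |log c|) γ x
      ≤ c * powerLogTail (τ - 2) (2 ^ γ * C) γ x :=
        powerLogTail_add_abs_log_le (by positivity) (one_le_log_rpow hx3 hγ₀.le) (by linarith)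
    _ = 2 ^ (-(τ - 2)) * powerLogTail (τ - 2) (2 ^ γ * C) γ x / M := by ring
    _ ≤ (x + 2) * powerLogTail (τ - 1) C γ (x + 1) / M :=
        div_le_div_of_nonneg_right
          (powerLogTail_le_mul_powerLogTail_add_one hτ₁.le hC.le hγ₀.le (by linarith)) hM.le
    _ ≤ (x + 2) * (μ (Set.Ioi (x + 1))).toReal / M := by gcongr
    _ ≤ (ν (Set.Ioi x)).toReal := Measure.mul_toReal_measure_Ioi_le_of_sizeBiased hsb x

/-- Let `D_n` have law `μ` on ℕ with finite mean, and `B_n` (law `ν`) its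
size-biased version minus one: `P(B_n = k) = (k+1)·P(D_n = k+1)/E[D_n]`. If
`1 − F_n(x) = P(D_n > x) ≥ x^{−(τ−1)}e^{−C(log x)^γ}` with `τ ∈ (2,3)`, `C > 0`,
`γ ∈ (0,1)`, then there is `C* > 0` with
`1 − F_{B_n}(x) = P(B_n > x) ≥ x^{−(τ−2)}e^{−C*(log x)^γ}` for all large `x`. -/
theorem size_biased_tail_lower_bound (τ C γ : ℝ) (hτ₁ : 2 < τ) (hτ₂ : τ < 3)
    (hC : 0 < C) (hγ₀ : 0 < γ) (hγ₁ : γ < 1)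
    (μ ν : Measure ℕ) [IsProbabilityMeasure μ] [IsProbabilityMeasure ν]
    (hmean : (∑' k : ℕ, (k : ENNReal) * μ {k}) ≠ ⊤)
    (hmean0 : (∑' k : ℕ, (k : ENNReal) * μ {k}) ≠ 0)
    (hsb : ∀ k : ℕ,
      ν {k} = ((k : ENNReal) + 1) * μ {k + 1} / (∑' j : ℕ, (j : ENNReal) * μ {j}))
    (htail : ∀ x : ℕ, 1 ≤ x →
      (x : ℝ) ^ (-(τ - 1)) * Real.exp (-C * (Real.log x) ^ γ) ≤ (μ {n | x < n}).toReal) :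
    ∃ Cstar > 0, ∃ x₀ : ℕ, ∀ x : ℕ, x₀ ≤ x →
      (x : ℝ) ^ (-(τ - 2)) * Real.exp (-Cstar * (Real.log x) ^ γ) ≤
        (ν {n | x < n}).toReal :=
  size_biased_tail_lower_bound_general τ C γ hτ₁ hC hγ₀ μ ν hmean hmean0 hsb htail
end
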